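/- In the elliptic setting, suppose Assumption A(m) is satisfied with some m ≥ 0, Assumption B holds, and Assumption D holds (c ≥ c₀ > 0). Then for each h ∈ (0,h₀] the equation L_h v_h(x) + f(x) = 0, x ∈ ℝ^d, has a unique bounded solution v_h; moreover v_h belongs to B^m. -/

import Mathlib

noncomputable section

open MeasureTheory Finset Set

/-- Euclidean space `ℝ^d`. -/
abbrev Euc (d : ℕ) := EuclideanSpace ℝ (Fin d)

variable {d : ℕ}

/-- Directional derivative `∂_λ φ = Σ_i λ_i D_i φ`. -/
def dirD (lam : Euc d) (φ : Euc d → ℝ) : Euc d → ℝ := fun x => fderiv ℝ φ x lam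

/-- Iterated directional derivative `∂_λ^n φ`. -/
def dirDIter (lam : Euc d) : ℕ → (Euc d → ℝ) → Euc d → ℝ
  | 0 => fun φ => φ
  | n + 1 => fun φ => dirD lam (dirDIter lam n φ)

/-- Finite difference `δ_{h,λ}φ(x) = h⁻¹(φ(x+hλ) − φ(x))`. -/
def deltaOp (h : ℝ) (lam : Euc d) (φ : Euc d → ℝ) : Euc d → ℝ :=
  fun x => h⁻¹ * (φ (x + h • lam) - φ x)

/-- The finite-difference operator `L_h v = L_h⁰ v − c v` (elliptic setting). -/
def LhE (Λ₁ : Finset (Euc d)) (q p : Euc d → Euc d → ℝ) (c : Euc d → ℝ)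
    (h : ℝ) (v : Euc d → ℝ) : Euc d → ℝ :=
  fun x => (∑ lam ∈ Λ₁, (h⁻¹ * q lam x + p lam x) * deltaOp h lam v x) - c x * v x

/-- The differential operator `𝓛 = (1/2)Σ q_λ ∂_λ² + Σ p_λ ∂_λ − c` (elliptic setting). -/
def cLE (Λ₁ : Finset (Euc d)) (q p : Euc d → Euc d → ℝ) (c : Euc d → ℝ)
    (v : Euc d → ℝ) : Euc d → ℝ :=
  fun x => (∑ lam ∈ Λ₁, ((1 / 2) * q lam x * dirDIter lam 2 v x
      + p lam x * dirD lam v x)) - c x * v x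

/-- Membership in the class `B^m` (functions of `x` alone). -/
def MemBe (m : ℕ) (v : Euc d → ℝ) : Prop :=
  ContDiff ℝ (m : ℕ∞) v ∧ ∃ C : ℝ, ∀ x : Euc d, ∀ i ≤ m, ‖iteratedFDeriv ℝ i v x‖ ≤ C

/-- The norm `‖v‖_m` on `B^m`. -/
def normBe (m : ℕ) (v : Euc d → ℝ) : ℝ :=
  sSup {r : ℝ | ∃ x : Euc d,
    r = Real.sqrt (∑ i ∈ Finset.range (m + 1), ‖iteratedFDeriv ℝ i v x‖ ^ 2)}

/-- Assumption A(m) in the elliptic setting. -/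
def AssumpAE (Λ₁ : Finset (Euc d)) (m : ℕ) (q p : Euc d → Euc d → ℝ)
    (c f : Euc d → ℝ) (M : ℕ → ℝ) : Prop :=
  (∀ lam ∈ Λ₁, MemBe m (q lam) ∧ MemBe m (p lam) ∧ ∀ x : Euc d, 0 ≤ q lam x) ∧
  MemBe m c ∧ MemBe m f ∧
  ∀ k ≤ m, ∀ x : Euc d,
    (∑ lam ∈ Λ₁, (‖iteratedFDeriv ℝ k (q lam) x‖ ^ 2 + ‖iteratedFDeriv ℝ k (p lam) x‖ ^ 2))
      + ‖iteratedFDeriv ℝ k c x‖ ^ 2 ≤ (M k) ^ 2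

/-- Assumption B: `χ_{h,λ} = q_λ + h p_λ ≥ 0` (elliptic setting). -/
def AssumpBE (Λ₁ : Finset (Euc d)) (q p : Euc d → Euc d → ℝ) (h₀ : ℝ) : Prop :=
  ∀ h ∈ Ioc (0 : ℝ) h₀, ∀ lam ∈ Λ₁, ∀ x : Euc d, 0 ≤ q lam x + h * p lam x

/-- Assumption C: `Σ_λ λ q_λ = 0` (elliptic setting). -/
def AssumpCE (Λ₁ : Finset (Euc d)) (q : Euc d → Euc d → ℝ) : Prop :=
  ∀ x : Euc d, (∑ lam ∈ Λ₁, q lam x • lam) = (0 : Euc d)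

/-- Condition (S) (elliptic setting). -/
def CondSE (Λ₁ : Finset (Euc d)) (q : Euc d → Euc d → ℝ) : Prop :=
  (∀ lam : Euc d, lam ∈ Λ₁ ↔ -lam ∈ Λ₁) ∧
  ∀ lam ∈ Λ₁, ∀ x : Euc d, q lam x = q (-lam) x

/-- Condition (P) (elliptic setting). -/
def CondPE (Λ₁ : Finset (Euc d)) (p : Euc d → Euc d → ℝ) : Prop :=
  ∀ lam ∈ Λ₁, ∀ x : Euc d, p (-lam) x = - p lam x

/-- `v` is a bounded (Borel) solution of `L_h v + f = 0` on `ℝ^d`. -/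
def IsFDSolE (Λ₁ : Finset (Euc d)) (q p : Euc d → Euc d → ℝ) (c f : Euc d → ℝ)
    (h : ℝ) (v : Euc d → ℝ) : Prop :=
  Measurable v ∧ (∃ C : ℝ, ∀ x : Euc d, |v x| ≤ C) ∧
  ∀ x : Euc d, LhE Λ₁ q p c h v x + f x = 0

/-- `v` is a `B²` solution of the elliptic equation `𝓛v + f = 0` (a.e.). -/
def IsEllSol (Λ₁ : Finset (Euc d)) (q p : Euc d → Euc d → ℝ) (c f : Euc d → ℝ)
    (v : Euc d → ℝ) : Prop :=
  MemBe 2 v ∧ ∀ᵐ x : Euc d ∂volume, cLE Λ₁ q p c v x + f x = 0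

/-! ### The operators `δ̄`, `T`, `Q`, `A`, `𝒬` and the class `𝔎` -/

/-- `δ̄_{h,λ}` for `λ ∈ Λ = Λ₁ ⊕ Λ₂`. -/
def barD (τ : Euc d → ℝ) (τ₀ h : ℝ) (μ : Euc d ⊕ Fin d) (φ : Euc d → ℝ) : Euc d → ℝ :=
  match μ with
  | Sum.inl lam => fun x => τ lam * (h⁻¹ * (φ (x + h • lam) - φ x))
  | Sum.inr i => fun x => τ₀ * fderiv ℝ φ x (EuclideanSpace.single i 1)

/-- `T_{h,λ}` for `λ ∈ Λ = Λ₁ ⊕ Λ₂`. -/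
def TOp (h : ℝ) (μ : Euc d ⊕ Fin d) (φ : Euc d → ℝ) : Euc d → ℝ :=
  match μ with
  | Sum.inl lam => fun x => φ (x + h • lam)
  | Sum.inr _ => φ

/-- `δ̄_{h,λ}` for a pair `λ ∈ Λ²`. -/
def barD2 (τ : Euc d → ℝ) (τ₀ h : ℝ) (μ : (Euc d ⊕ Fin d) × (Euc d ⊕ Fin d))
    (φ : Euc d → ℝ) : Euc d → ℝ :=
  barD τ τ₀ h μ.1 (barD τ τ₀ h μ.2 φ)

/-- `T_{h,λ}` for a pair `λ ∈ Λ²`. -/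
def TOp2 (h : ℝ) (μ : (Euc d ⊕ Fin d) × (Euc d ⊕ Fin d)) (φ : Euc d → ℝ) : Euc d → ℝ :=
  TOp h μ.1 (TOp h μ.2 φ)

/-- Sum over `Λ = Λ₁ ∪ Λ₂`. -/
def sumL (Λ₁ : Finset (Euc d)) (F : Euc d ⊕ Fin d → ℝ) : ℝ :=
  (∑ lam ∈ Λ₁, F (Sum.inl lam)) + ∑ i : Fin d, F (Sum.inr i)

/-- Sum over `Λ²`. -/
def sumL2 (Λ₁ : Finset (Euc d)) (F : (Euc d ⊕ Fin d) × (Euc d ⊕ Fin d) → ℝ) : ℝ :=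
  sumL Λ₁ fun a => sumL Λ₁ fun b => F (a, b)

/-- `Q_{h,μ}φ = h⁻¹ Σ_{λ∈Λ₁} (δ̄_{h,μ}q_λ) δ_{h,λ}φ`, with `δ̄_{h,μ}` passed as `bD`. -/
def Qh (Λ₁ : Finset (Euc d)) (q : Euc d → Euc d → ℝ) (h : ℝ)
    (bD : (Euc d → ℝ) → Euc d → ℝ) (φ : Euc d → ℝ) : Euc d → ℝ :=
  fun x => h⁻¹ * ∑ lam ∈ Λ₁, bD (q lam) x * deltaOp h lam φ x

/-- `L⁰_{h,μ}φ = Q_{h,μ}φ + Σ_{λ∈Λ₁} (δ̄_{h,μ}p_λ) δ_{h,λ}φ`. -/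
def L0h (Λ₁ : Finset (Euc d)) (q p : Euc d → Euc d → ℝ) (h : ℝ)
    (bD : (Euc d → ℝ) → Euc d → ℝ) (φ : Euc d → ℝ) : Euc d → ℝ :=
  fun x => Qh Λ₁ q h bD φ x + ∑ lam ∈ Λ₁, bD (p lam) x * deltaOp h lam φ x

/-- `A_h(φ) = 2 Σ_{λ∈Λ} (δ̄_{h,λ}φ) L⁰_{h,λ} T_{h,λ}φ`. -/
def Ah (Λ₁ : Finset (Euc d)) (τ : Euc d → ℝ) (τ₀ : ℝ)
    (q p : Euc d → Euc d → ℝ) (h : ℝ) (φ : Euc d → ℝ) : Euc d → ℝ :=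
  fun x => 2 * sumL Λ₁ (fun μ =>
    barD τ τ₀ h μ φ x * L0h Λ₁ q p h (barD τ τ₀ h μ) (TOp h μ φ) x)

/-- `𝒬_h(φ) = Σ_{λ∈Λ₁} χ_{h,λ} (δ_{h,λ}φ)²`. -/
def QQh (Λ₁ : Finset (Euc d)) (q p : Euc d → Euc d → ℝ) (h : ℝ)
    (φ : Euc d → ℝ) : Euc d → ℝ :=
  fun x => ∑ lam ∈ Λ₁, (q lam x + h * p lam x) * (deltaOp h lam φ x) ^ 2

/-- The class `𝔎` of bounded positivity-preserving operators with `𝒦1 ≤ 1`. -/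
def MemFrK (Kop : (Euc d → ℝ) → Euc d → ℝ) : Prop :=
  (∃ C : ℝ, ∀ φ : Euc d → ℝ, ∀ B : ℝ, (∀ x, |φ x| ≤ B) → ∀ x, |Kop φ x| ≤ C * B) ∧
  (∀ φ : Euc d → ℝ, (∀ x, 0 ≤ φ x) → ∀ x, 0 ≤ Kop φ x) ∧
  (∀ x : Euc d, Kop (fun _ => 1) x ≤ 1)

/-- Assumption E (elliptic setting). -/
def AssumpEE (Λ₁ : Finset (Euc d)) (τ : Euc d → ℝ) (τ₀ δ K : ℝ)
    (q p : Euc d → Euc d → ℝ) (c : Euc d → ℝ) (h₀ : ℝ) (m : ℕ) : Prop :=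
  ∀ h ∈ Ioc (0 : ℝ) h₀, ∃ Kop : (Euc d → ℝ) → Euc d → ℝ, MemFrK Kop ∧
    ∀ φ : Euc d → ℝ, ContDiff ℝ (⊤ : ℕ∞) φ → ∀ x : Euc d,
      (m : ℝ) * Ah Λ₁ τ τ₀ q p h φ x
        ≤ (1 - δ) * sumL Λ₁ (fun μ => QQh Λ₁ q p h (barD τ τ₀ h μ φ) x)
          + K * QQh Λ₁ q p h φ x
          + 2 * (1 - δ) * c x *
            Kop (fun y => sumL Λ₁ (fun μ => (barD τ τ₀ h μ φ y) ^ 2)) x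

/-- Assumption F (elliptic setting). -/
def AssumpFE (Λ₁ : Finset (Euc d)) (τ : Euc d → ℝ) (τ₀ δ K : ℝ)
    (q p : Euc d → Euc d → ℝ) (c : Euc d → ℝ) (h₀ : ℝ) (m : ℕ) : Prop :=
  ∀ h ∈ Ioc (0 : ℝ) h₀, ∀ n : ℕ, 1 ≤ n → n ≤ m →
    ∃ Kop : (Euc d → ℝ) → Euc d → ℝ, MemFrK Kop ∧
    ∀ φ : Euc d → ℝ, ContDiff ℝ (⊤ : ℕ∞) φ → ∀ x : Euc d,
      (n : ℝ) * sumL Λ₁ (fun ν => Ah Λ₁ τ τ₀ q p h (barD τ τ₀ h ν φ) x)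
        + (n : ℝ) * ((n : ℝ) - 1) * sumL2 Λ₁ (fun μ =>
            barD2 τ τ₀ h μ φ x * Qh Λ₁ q h (barD2 τ τ₀ h μ) (TOp2 h μ φ) x)
      ≤ (1 - δ) * sumL2 Λ₁ (fun μ => QQh Λ₁ q p h (barD2 τ τ₀ h μ φ) x)
        + K * sumL Λ₁ (fun μ => QQh Λ₁ q p h (barD τ τ₀ h μ φ) x)
        + 2 * (1 - δ) * c x *
            Kop (fun y => sumL2 Λ₁ (fun μ => (barD2 τ τ₀ h μ φ y) ^ 2)) x
        + K * Kop (fun y => sumL Λ₁ (fun μ => (barD τ τ₀ h μ φ y) ^ 2)) x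

/-- The Full Assumptions(m) in the elliptic setting: A(m), B, C, D, E, F. -/
def FullAssumpE (Λ₁ : Finset (Euc d)) (τ : Euc d → ℝ) (τ₀ δ K c₀ : ℝ)
    (q p : Euc d → Euc d → ℝ) (c f : Euc d → ℝ) (h₀ : ℝ) (m : ℕ) (M : ℕ → ℝ) : Prop :=
  AssumpAE Λ₁ m q p c f M ∧ AssumpBE Λ₁ q p h₀ ∧ AssumpCE Λ₁ q ∧
  (∀ x : Euc d, c₀ ≤ c x) ∧
  AssumpEE Λ₁ τ τ₀ δ K q p c h₀ m ∧ AssumpFE Λ₁ τ τ₀ δ K q p c h₀ m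

/-- Richardson extrapolation coefficients `(b₀,…,b_k) = (1,0,…,0)V⁻¹`,
`V^{ij} = 2^{−(i−1)(j−1)}`. -/
def bcoef (k : ℕ) : Fin (k + 1) → ℝ :=
  fun j => (Matrix.of fun i j' : Fin (k + 1) => ((2 : ℝ) ^ ((i : ℕ) * (j' : ℕ)))⁻¹)⁻¹ 0 j

/-- Reduced extrapolation coefficients `(b̃₀,…,b̃_{k̃}) = (1,0,…,0)Ṽ⁻¹`,
`Ṽ^{ij} = 4^{−(i−1)(j−1)}`. -/
def btcoef (kt : ℕ) : Fin (kt + 1) → ℝ :=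
  fun j => (Matrix.of fun i j' : Fin (kt + 1) => ((4 : ℝ) ^ ((i : ℕ) * (j' : ℕ)))⁻¹)⁻¹ 0 j

end


/-! ### Auxiliary machinery for Statement 12 -/


section AuxShift
variable {E F : Type*} [NormedAddCommGroup E] [NormedSpace ℝ E]
  [NormedAddCommGroup F] [NormedSpace ℝ F]

lemma aux_fderiv_shift (g : E → F) (a x : E) :
    fderiv ℝ (fun y => g (y + a)) x = fderiv ℝ g (x + a) := by
  by_cases hg : DifferentiableAt ℝ g (x + a)
  · have h1 : HasFDerivAt (fun y : E => y + a) (ContinuousLinearMap.id ℝ E) x :=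
      (hasFDerivAt_id x).add_const a
    have h2 := hg.hasFDerivAt.comp x h1
    exact h2.fderiv
  · have hg' : ¬ DifferentiableAt ℝ (fun y => g (y + a)) x := by
      intro hcon
      apply hg
      have hsub : DifferentiableAt ℝ (fun z : E => z - a) (x + a) :=
        differentiableAt_id.sub_const a
      have := DifferentiableAt.comp (x + a)
        (by simpa using hcon : DifferentiableAt ℝ (fun y => g (y + a)) ((x + a) - a)) hsub
      simpa [Function.comp_def] using this
    rw [fderiv_zero_of_not_differentiableAt hg, fderiv_zero_of_not_differentiableAt hg']

lemma aux_iteratedFDeriv_shift (g : E → F) (a : E) (k : ℕ) :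
    ∀ x, iteratedFDeriv ℝ k (fun y => g (y + a)) x = iteratedFDeriv ℝ k g (x + a) := by
  induction k with
  | zero =>
    intro x
    ext m
    simp [iteratedFDeriv_zero_apply]
  | succ k IH =>
    intro x
    rw [iteratedFDeriv_succ_eq_comp_left, iteratedFDeriv_succ_eq_comp_left]
    simp only [Function.comp_apply]
    congr 1
    have hrw : (iteratedFDeriv ℝ k fun y => g (y + a)) = fun y => iteratedFDeriv ℝ k g (y + a) :=
      funext IH
    rw [hrw, aux_fderiv_shift]

end AuxShift

lemma aux_choose_sum (k m : ℕ) (hk : k ≤ m) :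
    (∑ i ∈ Finset.range k, (k.choose (i + 1) : ℝ)) ≤ 2 ^ m := by
  have h1 : (∑ i ∈ Finset.range k, k.choose (i + 1)) ≤ 2 ^ k := by
    have h2 := Nat.sum_range_choose k
    have h3 : ∑ i ∈ Finset.range (k + 1), k.choose i
        = (∑ i ∈ Finset.range k, k.choose (i + 1)) + k.choose 0 :=
      Finset.sum_range_succ' _ _
    omega
  calc (∑ i ∈ Finset.range k, (k.choose (i + 1) : ℝ))
      = ((∑ i ∈ Finset.range k, k.choose (i + 1) : ℕ) : ℝ) := by push_cast; ring
    _ ≤ ((2 : ℝ)) ^ k := by exact_mod_cast h1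
    _ ≤ 2 ^ m := by exact pow_le_pow_right₀ (by norm_num) hk

lemma aux_leibniz {d : ℕ} {m k : ℕ} (hk : k ≤ m) {b u : Euc d → ℝ}
    (hb : ContDiff ℝ (m : ℕ∞) b) (hu : ContDiff ℝ (m : ℕ∞) u) (x : Euc d) :
    ‖iteratedFDeriv ℝ k (fun y => b y * u y) x‖ ≤
      (∑ i ∈ Finset.range k, (k.choose (i + 1) : ℝ) * ‖iteratedFDeriv ℝ (i + 1) b x‖
          * ‖iteratedFDeriv ℝ (k - (i + 1)) u x‖)
        + |b x| * ‖iteratedFDeriv ℝ k u x‖ := by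
  have h := norm_iteratedFDeriv_mul_le (𝕜 := ℝ) hb hu x (by exact_mod_cast hk)
  rw [Finset.sum_range_succ'] at h
  simpa [norm_iteratedFDeriv_zero, Real.norm_eq_abs] using h

set_option maxHeartbeats 1600000 in
lemma master_fixed_point {d : ℕ} (m : ℕ) (Λ : Finset (Euc d)) (h : ℝ)
    (b0 : Euc d → ℝ) (bb : Euc d → Euc d → ℝ) (w0 : Euc d → ℝ)
    (θ Cb C0 : ℝ) (hθ1 : θ < 1)
    (hb0s : ContDiff ℝ (m : ℕ∞) b0) (hbs : ∀ lam ∈ Λ, ContDiff ℝ (m : ℕ∞) (bb lam))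
    (hb0n : ∀ x, 0 ≤ b0 x) (hbn : ∀ lam ∈ Λ, ∀ x, 0 ≤ bb lam x)
    (hsum : ∀ x, b0 x + ∑ lam ∈ Λ, bb lam x ≤ θ)
    (hCb : ∀ k, k ≤ m → ∀ x, ‖iteratedFDeriv ℝ k b0 x‖
        + ∑ lam ∈ Λ, ‖iteratedFDeriv ℝ k (bb lam) x‖ ≤ Cb)
    (hw0 : ContDiff ℝ (m : ℕ∞) w0) (hC0 : ∀ k ≤ m, ∀ x, ‖iteratedFDeriv ℝ k w0 x‖ ≤ C0) :
    ∃ v : Euc d → ℝ, MemBe m v ∧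
      ∀ x, v x = b0 x * v x + (∑ lam ∈ Λ, bb lam x * v (x + h • lam)) + w0 x := by
  classical
  have hθ0 : 0 ≤ θ := by
    refine le_trans ?_ (hsum 0)
    have := hb0n 0
    have h2 : (0:ℝ) ≤ ∑ lam ∈ Λ, bb lam 0 := Finset.sum_nonneg fun lam hlam => hbn lam hlam 0
    linarith
  set ρ : ℝ := (1 + θ) / 2 with hρdef
  have hθρ : θ < ρ := by rw [hρdef]; linarith
  have hρ1 : ρ < 1 := by rw [hρdef]; linarith
  have hρ0 : 0 ≤ ρ := by rw [hρdef]; linarith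
  have hCb0 : 0 ≤ Cb := by
    refine le_trans ?_ (hCb 0 (Nat.zero_le m) 0)
    have : (0:ℝ) ≤ ∑ lam ∈ Λ, ‖iteratedFDeriv ℝ 0 (bb lam) 0‖ :=
      Finset.sum_nonneg fun lam _ => norm_nonneg _
    have := norm_nonneg (iteratedFDeriv ℝ 0 b0 0)
    linarith
  have hC00 : 0 ≤ C0 := le_trans (norm_nonneg _) (hC0 0 (Nat.zero_le m) 0)
  set β : ℝ := 1 + 2 ^ m * Cb / (ρ - θ) with hβdef
  have hβ1 : 1 ≤ β := by
    rw [hβdef]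
    have hρθ : (0:ℝ) < ρ - θ := by linarith
    have : (0:ℝ) ≤ 2 ^ m * Cb / (ρ - θ) := div_nonneg (by positivity) hρθ.le
    linarith
  set A : ℕ → ℝ := fun k => (C0 + 1) * β ^ k with hAdef
  have hA0 : ∀ k, 0 ≤ A k := fun k => by
    have : (0:ℝ) ≤ β ^ k := by positivity
    simp only [hAdef]; nlinarith
  have hAmono : ∀ j k : ℕ, j ≤ k → A j ≤ A k := by
    intro j k hjk
    simp only [hAdef]
    have := pow_le_pow_right₀ hβ1 hjk
    nlinarith
  set K : (Euc d → ℝ) → Euc d → ℝ :=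
    fun w x => b0 x * w x + ∑ lam ∈ Λ, bb lam x * w (x + h • lam) with hKdef
  set w : ℕ → Euc d → ℝ := fun n => K^[n] w0 with hwdef
  have hw0' : w 0 = w0 := rfl
  have hwsucc : ∀ n, w (n + 1) = K (w n) := by
    intro n
    simp only [hwdef]
    exact Function.iterate_succ_apply' K n w0
  have main : ∀ n, ContDiff ℝ (m : ℕ∞) (w n) ∧
      ∀ k, k ≤ m → ∀ x, ‖iteratedFDeriv ℝ k (w n) x‖ ≤ A k * ρ ^ n := by
    intro n
    induction n with
    | zero =>
      refine ⟨by rw [hw0']; exact hw0, ?_⟩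
      intro k hk x
      rw [hw0']
      have h1 : (1:ℝ) ≤ β ^ k := one_le_pow₀ hβ1
      have := hC0 k hk x
      simp only [pow_zero, hAdef, mul_one]
      nlinarith
    | succ n IH =>
      obtain ⟨hsmn, hbdn⟩ := IH
      have hshift_cd : ∀ lam : Euc d, ContDiff ℝ (m : ℕ∞) (fun y => w n (y + h • lam)) :=
        fun lam => hsmn.comp (contDiff_id.add contDiff_const)
      have hterm_cd : ∀ lam ∈ Λ, ContDiff ℝ (m : ℕ∞) (fun y => bb lam y * w n (y + h • lam)) :=
        fun lam hlam => (hbs lam hlam).mul (hshift_cd lam)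
      have hsum_cd : ContDiff ℝ (m : ℕ∞) (fun y => ∑ lam ∈ Λ, bb lam y * w n (y + h • lam)) :=
        ContDiff.sum fun lam hlam => hterm_cd lam hlam
      have hKsm : ContDiff ℝ (m : ℕ∞) (K (w n)) := by
        simp only [hKdef]
        exact (hb0s.mul hsmn).add hsum_cd
      refine ⟨by rw [hwsucc]; exact hKsm, ?_⟩
      intro k hk x
      rw [hwsucc]
      have hkm' : (k : WithTop ℕ∞) ≤ ((m : ℕ∞) : WithTop ℕ∞) := by exact_mod_cast hk
      have e1 : iteratedFDeriv ℝ k (K (w n)) x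
          = iteratedFDeriv ℝ k (fun y => b0 y * w n y) x
            + iteratedFDeriv ℝ k (fun y => ∑ lam ∈ Λ, bb lam y * w n (y + h • lam)) x := by
        simp only [hKdef]
        exact iteratedFDeriv_add_apply' ((hb0s.mul hsmn).of_le hkm').contDiffAt (hsum_cd.of_le hkm').contDiffAt
      have e2 : iteratedFDeriv ℝ k (fun y => ∑ lam ∈ Λ, bb lam y * w n (y + h • lam)) x
          = ∑ lam ∈ Λ, iteratedFDeriv ℝ k (fun y => bb lam y * w n (y + h • lam)) x := by
        have h3 := iteratedFDeriv_sum (𝕜 := ℝ)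
          (f := fun lam y => bb lam y * w n (y + h • lam)) (u := Λ) (i := k)
          (fun lam hlam => (hterm_cd lam hlam).of_le hkm')
        have h4 := congrFun h3 x
        simpa using h4
      have hρn : (0:ℝ) ≤ ρ ^ n := by positivity
      have hAk1 : (0:ℝ) ≤ A (k-1) * ρ ^ n := mul_nonneg (hA0 _) hρn
      have step1 : ‖iteratedFDeriv ℝ k (K (w n)) x‖
          ≤ ‖iteratedFDeriv ℝ k (fun y => b0 y * w n y) x‖
            + ∑ lam ∈ Λ, ‖iteratedFDeriv ℝ k (fun y => bb lam y * w n (y + h • lam)) x‖ := by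
        rw [e1, e2]
        exact (norm_add_le _ _).trans (add_le_add le_rfl (norm_sum_le _ _))
      have hwb : ∀ (j : ℕ), j ≤ m → ∀ z, ‖iteratedFDeriv ℝ j (w n) z‖ ≤ A j * ρ ^ n :=
        fun j hj z => hbdn j hj z
      have hub : ∀ i ∈ Finset.range k, ∀ z, ‖iteratedFDeriv ℝ (k - (i+1)) (w n) z‖
          ≤ A (k-1) * ρ ^ n := by
        intro i hi z
        refine (hwb (k - (i+1)) (by omega) z).trans ?_
        exact mul_le_mul_of_nonneg_right (hAmono _ _ (by omega)) hρn
      have step2 : ‖iteratedFDeriv ℝ k (fun y => b0 y * w n y) x‖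
          ≤ (∑ i ∈ Finset.range k, (k.choose (i + 1) : ℝ) * ‖iteratedFDeriv ℝ (i + 1) b0 x‖
              * (A (k-1) * ρ ^ n))
            + b0 x * (A k * ρ ^ n) := by
        refine (aux_leibniz hk hb0s hsmn x).trans ?_
        rw [abs_of_nonneg (hb0n x)]
        refine add_le_add (Finset.sum_le_sum fun i hi => ?_)
          (mul_le_mul_of_nonneg_left (hwb k hk x) (hb0n x))
        exact mul_le_mul_of_nonneg_left (hub i hi x) (by positivity)
      have step3 : ∀ lam ∈ Λ,
          ‖iteratedFDeriv ℝ k (fun y => bb lam y * w n (y + h • lam)) x‖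
          ≤ (∑ i ∈ Finset.range k, (k.choose (i + 1) : ℝ)
              * ‖iteratedFDeriv ℝ (i + 1) (bb lam) x‖ * (A (k-1) * ρ ^ n))
            + bb lam x * (A k * ρ ^ n) := by
        intro lam hlam
        refine (aux_leibniz hk (hbs lam hlam) (hshift_cd lam) x).trans ?_
        rw [abs_of_nonneg (hbn lam hlam x)]
        have hsh : ∀ (j : ℕ), iteratedFDeriv ℝ j (fun y => w n (y + h • lam)) x
            = iteratedFDeriv ℝ j (w n) (x + h • lam) :=
          fun j => aux_iteratedFDeriv_shift (w n) (h • lam) j x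
        simp only [hsh]
        refine add_le_add (Finset.sum_le_sum fun i hi => ?_)
          (mul_le_mul_of_nonneg_left (hwb k hk _) (hbn lam hlam x))
        exact mul_le_mul_of_nonneg_left (hub i hi _) (by positivity)
      set Sk : ℝ := ∑ i ∈ Finset.range k, (k.choose (i + 1) : ℝ) with hSkdef
      have hSk0 : 0 ≤ Sk := Finset.sum_nonneg fun i _ => by positivity
      have step4 : ‖iteratedFDeriv ℝ k (K (w n)) x‖
          ≤ Sk * Cb * (A (k-1) * ρ ^ n) + θ * (A k * ρ ^ n) := by
        refine step1.trans ?_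
        have step3' : ∑ lam ∈ Λ, ‖iteratedFDeriv ℝ k (fun y => bb lam y * w n (y + h • lam)) x‖
            ≤ (∑ lam ∈ Λ, ∑ i ∈ Finset.range k, (k.choose (i + 1) : ℝ)
                * ‖iteratedFDeriv ℝ (i + 1) (bb lam) x‖ * (A (k-1) * ρ ^ n))
              + (∑ lam ∈ Λ, bb lam x) * (A k * ρ ^ n) := by
          rw [Finset.sum_mul, ← Finset.sum_add_distrib]
          exact Finset.sum_le_sum step3
        have hcross : (∑ i ∈ Finset.range k, (k.choose (i + 1) : ℝ)
                * ‖iteratedFDeriv ℝ (i + 1) b0 x‖ * (A (k-1) * ρ ^ n))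
              + ∑ lam ∈ Λ, ∑ i ∈ Finset.range k, (k.choose (i + 1) : ℝ)
                * ‖iteratedFDeriv ℝ (i + 1) (bb lam) x‖ * (A (k-1) * ρ ^ n)
            ≤ Sk * Cb * (A (k-1) * ρ ^ n) := by
          rw [Finset.sum_comm, ← Finset.sum_add_distrib]
          have hper : ∀ i ∈ Finset.range k,
              (k.choose (i + 1) : ℝ) * ‖iteratedFDeriv ℝ (i + 1) b0 x‖ * (A (k-1) * ρ ^ n)
                + ∑ lam ∈ Λ, (k.choose (i + 1) : ℝ)
                  * ‖iteratedFDeriv ℝ (i + 1) (bb lam) x‖ * (A (k-1) * ρ ^ n)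
              ≤ (k.choose (i + 1) : ℝ) * Cb * (A (k-1) * ρ ^ n) := by
            intro i hi
            have hCbi := hCb (i+1) (by have := Finset.mem_range.mp hi; omega) x
            have e : ∑ lam ∈ Λ, (k.choose (i + 1) : ℝ)
                  * ‖iteratedFDeriv ℝ (i + 1) (bb lam) x‖ * (A (k-1) * ρ ^ n)
                = (k.choose (i + 1) : ℝ)
                  * (∑ lam ∈ Λ, ‖iteratedFDeriv ℝ (i + 1) (bb lam) x‖) * (A (k-1) * ρ ^ n) := by
              rw [Finset.mul_sum, Finset.sum_mul]
            rw [e]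
            have hch : (0:ℝ) ≤ (k.choose (i + 1) : ℝ) := by positivity
            nlinarith [mul_nonneg (mul_nonneg hch (sub_nonneg.2 hCbi)) hAk1]
          refine (Finset.sum_le_sum hper).trans ?_
          rw [hSkdef, Finset.sum_mul, Finset.sum_mul]
        have hsumθ : (b0 x + ∑ lam ∈ Λ, bb lam x) * (A k * ρ ^ n) ≤ θ * (A k * ρ ^ n) :=
          mul_le_mul_of_nonneg_right (hsum x) (mul_nonneg (hA0 _) hρn)
        calc ‖iteratedFDeriv ℝ k (fun y => b0 y * w n y) x‖
              + ∑ lam ∈ Λ, ‖iteratedFDeriv ℝ k (fun y => bb lam y * w n (y + h • lam)) x‖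
            ≤ ((∑ i ∈ Finset.range k, (k.choose (i + 1) : ℝ)
                * ‖iteratedFDeriv ℝ (i + 1) b0 x‖ * (A (k-1) * ρ ^ n)) + b0 x * (A k * ρ ^ n))
              + ((∑ lam ∈ Λ, ∑ i ∈ Finset.range k, (k.choose (i + 1) : ℝ)
                * ‖iteratedFDeriv ℝ (i + 1) (bb lam) x‖ * (A (k-1) * ρ ^ n))
              + (∑ lam ∈ Λ, bb lam x) * (A k * ρ ^ n)) := add_le_add step2 step3'
          _ ≤ Sk * Cb * (A (k-1) * ρ ^ n) + θ * (A k * ρ ^ n) := by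
              have h1 := hcross
              have h2 : b0 x * (A k * ρ ^ n) + (∑ lam ∈ Λ, bb lam x) * (A k * ρ ^ n)
                  ≤ θ * (A k * ρ ^ n) := by
                rw [← add_mul]; exact hsumθ
              linarith
      refine step4.trans ?_
      rcases Nat.eq_zero_or_pos k with hk0 | hkpos
      · subst hk0
        have : Sk = 0 := by simp [hSkdef]
        rw [this]
        have hAkn : (0:ℝ) ≤ A 0 * ρ ^ n := mul_nonneg (hA0 _) hρn
        rw [pow_succ]
        nlinarith
      · have hSk2m : Sk ≤ 2 ^ m := aux_choose_sum k m hk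
        have hAk : A k = A (k-1) * β := by
          simp only [hAdef]
          rw [mul_assoc, ← pow_succ]
          congr 2
          omega
        have hρθ : (0:ℝ) < ρ - θ := by linarith
        have h2m : (ρ - θ) * (β - 1) = (2:ℝ) ^ m * Cb := by
          rw [hβdef]
          field_simp
          ring
        have hAk10 : (0:ℝ) ≤ A (k-1) := hA0 _
        have hSkCb : Sk * Cb ≤ (ρ - θ) * β := by
          nlinarith [mul_le_mul_of_nonneg_right hSk2m hCb0]
        have e3 : (ρ - θ) * β * (A (k-1) * ρ ^ n) = (ρ - θ) * (A k * ρ ^ n) := by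
          rw [hAk]; ring
        rw [pow_succ]
        nlinarith [mul_le_mul_of_nonneg_right hSkCb hAk1, e3]

  have hcd : ∀ n, ContDiff ℝ (m : ℕ∞) (w n) := fun n => (main n).1
  have hsummk : ∀ k : ℕ, Summable (fun n : ℕ => A k * ρ ^ n) :=
    fun k => (summable_geometric_of_lt_one hρ0 hρ1).mul_left (A k)
  have hbd' : ∀ (k : ℕ) (n : ℕ) (x : Euc d), (k : ℕ∞) ≤ (m : ℕ∞) →
      ‖iteratedFDeriv ℝ k (w n) x‖ ≤ A k * ρ ^ n :=
    fun k n x hk => (main n).2 k (by exact_mod_cast hk) x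
  set v : Euc d → ℝ := fun x => ∑' n, w n x with hvdef
  have hvsm : ContDiff ℝ (m : ℕ∞) v :=
    contDiff_tsum hcd (fun k _ => hsummk k) hbd'
  have h1ρ : (0:ℝ) ≤ (1 - ρ)⁻¹ := inv_nonneg.2 (by linarith)
  have hnorm : ∀ (x : Euc d) (i : ℕ), i ≤ m → ‖iteratedFDeriv ℝ i v x‖ ≤ A m * (1 - ρ)⁻¹ := by
    intro x i hi
    have him : (i : ℕ∞) ≤ (m : ℕ∞) := by exact_mod_cast hi
    have hiter := iteratedFDeriv_tsum_apply hcd (fun k _ => hsummk k) hbd' him x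
    rw [hvdef, hiter]
    have hsumn : Summable (fun n => ‖iteratedFDeriv ℝ i (w n) x‖) :=
      (hsummk i).of_nonneg_of_le (fun n => norm_nonneg _) (fun n => hbd' i n x him)
    calc ‖∑' n, iteratedFDeriv ℝ i (w n) x‖ ≤ ∑' n, ‖iteratedFDeriv ℝ i (w n) x‖ :=
          norm_tsum_le_tsum_norm hsumn
      _ ≤ ∑' n, A i * ρ ^ n  := Summable.tsum_le_tsum (fun n => hbd' i n x him) hsumn (hsummk i)
      _ = A i * (1 - ρ)⁻¹ := by rw [tsum_mul_left, tsum_geometric_of_lt_one hρ0 hρ1]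
      _ ≤ A m * (1 - ρ)⁻¹ := mul_le_mul_of_nonneg_right (hAmono i m hi) h1ρ
  have hsump : ∀ y : Euc d, Summable fun n => w n y := by
    intro y
    refine Summable.of_norm_bounded (hsummk 0) (fun n => ?_)
    have := hbd' 0 n y (by exact_mod_cast Nat.zero_le m)
    simpa [norm_iteratedFDeriv_zero] using this
  refine ⟨v, ⟨hvsm, ⟨A m * (1 - ρ)⁻¹, fun x i hi => hnorm x i hi⟩⟩, ?_⟩
  intro x
  have hshift_sum : ∀ lam : Euc d, Summable fun n => bb lam x * w n (x + h • lam) :=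
    fun lam => (hsump _).mul_left _
  have h1 : v x = w0 x + ∑' n, w (n+1) x := by
    rw [hvdef]
    exact Summable.tsum_eq_zero_add (hsump x)
  have h2 : ∀ n : ℕ, w (n+1) x = b0 x * w n x + ∑ lam ∈ Λ, bb lam x * w n (x + h • lam) := by
    intro n
    rw [hwsucc n]
  have h3 : ∑' n, w (n+1) x = b0 x * v x + ∑ lam ∈ Λ, bb lam x * v (x + h • lam) := by
    calc ∑' n, w (n+1) x
        = ∑' n, (b0 x * w n x + ∑ lam ∈ Λ, bb lam x * w n (x + h • lam)) := tsum_congr h2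
      _ = (∑' n, b0 x * w n x) + ∑' n, ∑ lam ∈ Λ, bb lam x * w n (x + h • lam) :=
          Summable.tsum_add ((hsump x).mul_left _) (summable_sum fun lam _ => hshift_sum lam)
      _ = b0 x * v x + ∑ lam ∈ Λ, bb lam x * v (x + h • lam) := by
          rw [tsum_mul_left, Summable.tsum_finsetSum (fun lam _ => hshift_sum lam)]
          congr 1
          exact Finset.sum_congr rfl fun lam _ => tsum_mul_left
  calc v x = w0 x + ∑' n, w (n+1) x := h1
    _ = w0 x + (b0 x * v x + ∑ lam ∈ Λ, bb lam x * v (x + h • lam)) := by rw [h3]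
    _ = b0 x * v x + (∑ lam ∈ Λ, bb lam x * v (x + h • lam)) + w0 x := by ring

set_option maxHeartbeats 1600000

/-- Theorem `1.20.11.08`: in the elliptic setting, under Assumption A(m)
(`m ≥ 0`), Assumption B and Assumption D (`c ≥ c₀ > 0`), for each `h ∈ (0,h₀]` the equation
`L_h v_h + f = 0` has a unique bounded solution `v_h`, and `v_h ∈ B^m`. -/
theorem stmt_12 (d m : ℕ) (hd : 1 ≤ d) (h₀ c₀ : ℝ) (hh₀ : 0 < h₀) (hc₀ : 0 < c₀)
    (Λ₁ : Finset (Euc d)) (hΛ : (0 : Euc d) ∉ Λ₁)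
    (q p : Euc d → Euc d → ℝ) (c f : Euc d → ℝ) (M : ℕ → ℝ)
    (hA : AssumpAE Λ₁ m q p c f M)
    (hB : AssumpBE Λ₁ q p h₀)
    (hD : ∀ x : Euc d, c₀ ≤ c x) :
    ∀ h ∈ Set.Ioc (0 : ℝ) h₀,
      (∃ v : Euc d → ℝ, IsFDSolE Λ₁ q p c f h v) ∧
      (∀ v v' : Euc d → ℝ, IsFDSolE Λ₁ q p c f h v → IsFDSolE Λ₁ q p c f h v' →
        ∀ x : Euc d, v x = v' x) ∧
      (∀ v : Euc d → ℝ, IsFDSolE Λ₁ q p c f h v → MemBe m v) := by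
  classical
  obtain ⟨hqp, hcmem, hfmem, hM⟩ := hA
  intro h hh
  obtain ⟨hh0, hhh0⟩ := hh
  have hhne : h ≠ 0 := ne_of_gt hh0
  have hhinv : (0:ℝ) < h⁻¹ := inv_pos.2 hh0
  have hkm' : ∀ k : ℕ, k ≤ m → ((k : WithTop ℕ∞) ≤ ((m : ℕ∞) : WithTop ℕ∞)) :=
    fun k hk => by exact_mod_cast hk
  have hq_cd : ∀ lam ∈ Λ₁, ContDiff ℝ (m : ℕ∞) (q lam) := fun lam hl => (hqp lam hl).1.1
  have hp_cd : ∀ lam ∈ Λ₁, ContDiff ℝ (m : ℕ∞) (p lam) := fun lam hl => (hqp lam hl).2.1.1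
  have hc_cd : ContDiff ℝ (m : ℕ∞) c := hcmem.1
  have hf_cd : ContDiff ℝ (m : ℕ∞) f := hfmem.1
  obtain ⟨Cf, hCf⟩ := hfmem.2
  set MM : ℝ := ∑ j ∈ Finset.range (m+1), (M j)^2 with hMMdef
  have hMM0 : 0 ≤ MM := Finset.sum_nonneg fun j _ => sq_nonneg _
  have hMMk : ∀ k, k ≤ m → (M k)^2 ≤ MM := fun k hk =>
    Finset.single_le_sum (fun j _ => sq_nonneg (M j)) (Finset.mem_range.2 (by omega))
  have hqp_bd : ∀ k, k ≤ m → ∀ x, ∑ lam ∈ Λ₁,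
      (‖iteratedFDeriv ℝ k (q lam) x‖ + ‖iteratedFDeriv ℝ k (p lam) x‖)
      ≤ 2 * Λ₁.card + MM := by
    intro k hk x
    have h1 := hM k hk x
    have h2 : ∀ lam ∈ Λ₁, ‖iteratedFDeriv ℝ k (q lam) x‖ + ‖iteratedFDeriv ℝ k (p lam) x‖
        ≤ 2 + (‖iteratedFDeriv ℝ k (q lam) x‖^2 + ‖iteratedFDeriv ℝ k (p lam) x‖^2) := by
      intro lam _
      nlinarith [sq_nonneg (‖iteratedFDeriv ℝ k (q lam) x‖ - 1),
        sq_nonneg (‖iteratedFDeriv ℝ k (p lam) x‖ - 1)]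
    calc ∑ lam ∈ Λ₁, (‖iteratedFDeriv ℝ k (q lam) x‖ + ‖iteratedFDeriv ℝ k (p lam) x‖)
        ≤ ∑ lam ∈ Λ₁, (2 + (‖iteratedFDeriv ℝ k (q lam) x‖^2 + ‖iteratedFDeriv ℝ k (p lam) x‖^2)) :=
          Finset.sum_le_sum h2
      _ = 2 * Λ₁.card + ∑ lam ∈ Λ₁,
            (‖iteratedFDeriv ℝ k (q lam) x‖^2 + ‖iteratedFDeriv ℝ k (p lam) x‖^2) := by
          rw [Finset.sum_add_distrib, Finset.sum_const]
          push_cast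
          ring
      _ ≤ 2 * Λ₁.card + MM := by
          have h3 := hMMk k hk
          nlinarith [sq_nonneg ‖iteratedFDeriv ℝ k c x‖]
  have hc_bd : ∀ k, k ≤ m → ∀ x, ‖iteratedFDeriv ℝ k c x‖ ≤ 1 + MM := by
    intro k hk x
    have h1 := hM k hk x
    have h2 : (0:ℝ) ≤ ∑ lam ∈ Λ₁,
        (‖iteratedFDeriv ℝ k (q lam) x‖^2 + ‖iteratedFDeriv ℝ k (p lam) x‖^2) :=
      Finset.sum_nonneg fun lam _ => by positivity
    nlinarith [sq_nonneg (‖iteratedFDeriv ℝ k c x‖ - 1), hMMk k hk,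
      norm_nonneg (iteratedFDeriv ℝ k c x)]
  set a : Euc d → Euc d → ℝ := fun lam y => h⁻¹ * (h⁻¹ * q lam y + p lam y) with hadef
  have ha_cd : ∀ lam ∈ Λ₁, ContDiff ℝ (m : ℕ∞) (a lam) := fun lam hl =>
    contDiff_const.mul ((contDiff_const.mul (hq_cd lam hl)).add (hp_cd lam hl))
  have ha_nonneg : ∀ lam ∈ Λ₁, ∀ x, 0 ≤ a lam x := by
    intro lam hl x
    have hB' := hB h ⟨hh0, hhh0⟩ lam hl x
    have e : a lam x = h⁻¹ * h⁻¹ * (q lam x + h * p lam x) := by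
      simp only [hadef]
      field_simp
    rw [e]
    exact mul_nonneg (by positivity) hB'
  set Ca : ℝ := h⁻¹ * (h⁻¹ + 1) with hCadef
  have hCa0 : 0 ≤ Ca := by positivity
  have ha_bd : ∀ k, k ≤ m → ∀ x, ∀ lam ∈ Λ₁, ‖iteratedFDeriv ℝ k (a lam) x‖
      ≤ Ca * (‖iteratedFDeriv ℝ k (q lam) x‖ + ‖iteratedFDeriv ℝ k (p lam) x‖) := by
    intro k hk x lam hl
    have hqk := (hq_cd lam hl).of_le (hkm' k hk)
    have hpk := (hp_cd lam hl).of_le (hkm' k hk)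
    have ea : a lam = fun y => h⁻¹ • (h⁻¹ • q lam y + p lam y) := by
      funext y; simp [hadef, smul_eq_mul]
    rw [ea]
    have E1 : iteratedFDeriv ℝ k (fun y => h⁻¹ • (h⁻¹ • q lam y + p lam y)) x
        = h⁻¹ • iteratedFDeriv ℝ k (fun y => h⁻¹ • q lam y + p lam y) x :=
      iteratedFDeriv_const_smul_apply' ((hqk.const_smul h⁻¹).add hpk).contDiffAt
    have E2 : iteratedFDeriv ℝ k (fun y => h⁻¹ • q lam y + p lam y) x
        = iteratedFDeriv ℝ k (fun y => h⁻¹ • q lam y) x + iteratedFDeriv ℝ k (p lam) x :=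
      iteratedFDeriv_add_apply' (hqk.const_smul h⁻¹).contDiffAt hpk.contDiffAt
    have E3 : iteratedFDeriv ℝ k (fun y => h⁻¹ • q lam y) x
        = h⁻¹ • iteratedFDeriv ℝ k (q lam) x :=
      iteratedFDeriv_const_smul_apply' hqk.contDiffAt
    rw [E1, E2, E3, norm_smul, Real.norm_eq_abs, abs_of_pos hhinv]
    have h4 := norm_add_le (h⁻¹ • iteratedFDeriv ℝ k (q lam) x) (iteratedFDeriv ℝ k (p lam) x)
    rw [norm_smul, Real.norm_eq_abs, abs_of_pos hhinv] at h4
    have h5 : (0:ℝ) ≤ ‖iteratedFDeriv ℝ k (q lam) x‖ := norm_nonneg _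
    have h6 : (0:ℝ) ≤ ‖iteratedFDeriv ℝ k (p lam) x‖ := norm_nonneg _
    rw [hCadef]
    nlinarith [mul_le_mul_of_nonneg_left h4 hhinv.le,
      mul_nonneg (mul_nonneg hhinv.le hhinv.le) h5,
      mul_nonneg (mul_nonneg hhinv.le hhinv.le) h6,
      mul_nonneg hhinv.le h5, mul_nonneg hhinv.le h6]
  set κ : ℝ := (1 + MM) + Ca * (2 * Λ₁.card + MM) + 1 with hκdef
  have hκpos : 0 < κ := by
    have : (0:ℝ) ≤ Ca * (2 * Λ₁.card + MM) := mul_nonneg hCa0 (by positivity)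
    rw [hκdef]
    nlinarith
  have hκne : κ ≠ 0 := ne_of_gt hκpos
  have hκinv0 : (0:ℝ) ≤ κ⁻¹ := inv_nonneg.2 hκpos.le
  have hκinvpos : (0:ℝ) < κ⁻¹ := inv_pos.2 hκpos
  have hS_bd : ∀ x, ∑ lam ∈ Λ₁, a lam x ≤ Ca * (2 * Λ₁.card + MM) := by
    intro x
    calc ∑ lam ∈ Λ₁, a lam x
        ≤ ∑ lam ∈ Λ₁, ‖iteratedFDeriv ℝ 0 (a lam) x‖ := Finset.sum_le_sum fun lam hl => by
          rw [norm_iteratedFDeriv_zero, Real.norm_eq_abs]; exact le_abs_self _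
      _ ≤ ∑ lam ∈ Λ₁, Ca * (‖iteratedFDeriv ℝ 0 (q lam) x‖ + ‖iteratedFDeriv ℝ 0 (p lam) x‖) :=
          Finset.sum_le_sum fun lam hl => ha_bd 0 (Nat.zero_le m) x lam hl
      _ = Ca * ∑ lam ∈ Λ₁, (‖iteratedFDeriv ℝ 0 (q lam) x‖ + ‖iteratedFDeriv ℝ 0 (p lam) x‖) :=
          (Finset.mul_sum _ _ _).symm
      _ ≤ Ca * (2 * Λ₁.card + MM) :=
          mul_le_mul_of_nonneg_left (hqp_bd 0 (Nat.zero_le m) x) hCa0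
  have hc_val : ∀ x, c x ≤ 1 + MM := by
    intro x
    have h1 := hc_bd 0 (Nat.zero_le m) x
    rw [norm_iteratedFDeriv_zero, Real.norm_eq_abs] at h1
    linarith [le_abs_self (c x)]
  have hκbig : ∀ x, c x + ∑ lam ∈ Λ₁, a lam x ≤ κ := by
    intro x
    have h1 := hS_bd x
    have h2 := hc_val x
    rw [hκdef]
    linarith
  set b0 : Euc d → ℝ := fun y => 1 + (-κ⁻¹) * (c y + ∑ lam ∈ Λ₁, a lam y) with hb0def
  set bb : Euc d → Euc d → ℝ := fun lam y => κ⁻¹ * a lam y with hbbdef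
  set w0 : Euc d → ℝ := fun y => κ⁻¹ * f y with hw0def
  set θ : ℝ := 1 - κ⁻¹ * c₀ with hθdef
  have hsa_cd : ContDiff ℝ (m : ℕ∞) (fun y => ∑ lam ∈ Λ₁, a lam y) :=
    ContDiff.sum fun lam hl => ha_cd lam hl
  have hg_cd : ContDiff ℝ (m : ℕ∞) (fun y => c y + ∑ lam ∈ Λ₁, a lam y) := hc_cd.add hsa_cd
  have hb0_cd : ContDiff ℝ (m : ℕ∞) b0 := contDiff_const.add (contDiff_const.mul hg_cd)
  have hbb_cd : ∀ lam ∈ Λ₁, ContDiff ℝ (m : ℕ∞) (bb lam) := fun lam hl =>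
    contDiff_const.mul (ha_cd lam hl)
  have hw0_cd : ContDiff ℝ (m : ℕ∞) w0 := contDiff_const.mul hf_cd
  have hb0_nonneg : ∀ x, 0 ≤ b0 x := by
    intro x
    have h1 : κ⁻¹ * (c x + ∑ lam ∈ Λ₁, a lam x) ≤ κ⁻¹ * κ :=
      mul_le_mul_of_nonneg_left (hκbig x) hκinv0
    have h2 : κ⁻¹ * κ = 1 := inv_mul_cancel₀ hκne
    simp only [hb0def]
    linarith
  have hbb_nonneg : ∀ lam ∈ Λ₁, ∀ x, 0 ≤ bb lam x := fun lam hl x =>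
    mul_nonneg hκinv0 (ha_nonneg lam hl x)
  have hsumθ : ∀ x, b0 x + ∑ lam ∈ Λ₁, bb lam x ≤ θ := by
    intro x
    have e1 : ∑ lam ∈ Λ₁, bb lam x = κ⁻¹ * ∑ lam ∈ Λ₁, a lam x := by
      simp only [hbbdef]
      rw [Finset.mul_sum]
    have e2 : (-κ⁻¹) * (c x + ∑ lam ∈ Λ₁, a lam x)
        = -(κ⁻¹ * c x) - κ⁻¹ * ∑ lam ∈ Λ₁, a lam x := by ring
    have h3 : κ⁻¹ * c₀ ≤ κ⁻¹ * c x := mul_le_mul_of_nonneg_left (hD x) hκinv0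
    simp only [hb0def, hθdef, e1]
    linarith [e2]
  have hθ1 : θ < 1 := by
    have : 0 < κ⁻¹ * c₀ := mul_pos hκinvpos hc₀
    rw [hθdef]
    linarith
  have hsa_bd : ∀ k, k ≤ m → ∀ x, ∑ lam ∈ Λ₁, ‖iteratedFDeriv ℝ k (a lam) x‖
      ≤ Ca * (2 * Λ₁.card + MM) := by
    intro k hk x
    calc ∑ lam ∈ Λ₁, ‖iteratedFDeriv ℝ k (a lam) x‖
        ≤ ∑ lam ∈ Λ₁, Ca * (‖iteratedFDeriv ℝ k (q lam) x‖ + ‖iteratedFDeriv ℝ k (p lam) x‖) :=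
          Finset.sum_le_sum fun lam hl => ha_bd k hk x lam hl
      _ = Ca * ∑ lam ∈ Λ₁, (‖iteratedFDeriv ℝ k (q lam) x‖ + ‖iteratedFDeriv ℝ k (p lam) x‖) :=
          (Finset.mul_sum _ _ _).symm
      _ ≤ Ca * (2 * Λ₁.card + MM) := mul_le_mul_of_nonneg_left (hqp_bd k hk x) hCa0
  have hg_bd : ∀ k, k ≤ m → ∀ x, ‖iteratedFDeriv ℝ k (fun y => c y + ∑ lam ∈ Λ₁, a lam y) x‖
      ≤ (1 + MM) + Ca * (2 * Λ₁.card + MM) := by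
    intro k hk x
    have e : iteratedFDeriv ℝ k (fun y => c y + ∑ lam ∈ Λ₁, a lam y) x
        = iteratedFDeriv ℝ k c x + iteratedFDeriv ℝ k (fun y => ∑ lam ∈ Λ₁, a lam y) x :=
      iteratedFDeriv_add_apply' (hc_cd.of_le (hkm' k hk)).contDiffAt (hsa_cd.of_le (hkm' k hk)).contDiffAt
    have e2 : iteratedFDeriv ℝ k (fun y => ∑ lam ∈ Λ₁, a lam y) x
        = ∑ lam ∈ Λ₁, iteratedFDeriv ℝ k (a lam) x := by
      have h3 := iteratedFDeriv_sum (𝕜 := ℝ) (f := fun lam y => a lam y) (u := Λ₁) (i := k)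
        (fun lam hl => (ha_cd lam hl).of_le (hkm' k hk))
      have h4 := congrFun h3 x
      simpa using h4
    rw [e, e2]
    refine (norm_add_le _ _).trans ?_
    have h5 := hc_bd k hk x
    have h6 := (norm_sum_le Λ₁ (fun lam => iteratedFDeriv ℝ k (a lam) x)).trans (hsa_bd k hk x)
    linarith
  set Cb : ℝ := 1 + κ⁻¹ * ((1 + MM) + Ca * (2 * Λ₁.card + MM))
    + κ⁻¹ * (Ca * (2 * Λ₁.card + MM)) with hCbdef
  have hCb_bd : ∀ k, k ≤ m → ∀ x, ‖iteratedFDeriv ℝ k b0 x‖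
      + ∑ lam ∈ Λ₁, ‖iteratedFDeriv ℝ k (bb lam) x‖ ≤ Cb := by
    intro k hk x
    have hconst_bd : ‖iteratedFDeriv ℝ k (fun _ : Euc d => (1:ℝ)) x‖ ≤ 1 := by
      cases k with
      | zero => simp [norm_iteratedFDeriv_zero]
      | succ k => rw [iteratedFDeriv_const_of_ne (Nat.succ_ne_zero k)]; simp
    have eb0 : iteratedFDeriv ℝ k b0 x = iteratedFDeriv ℝ k (fun _ : Euc d => (1:ℝ)) x
        + (-κ⁻¹) • iteratedFDeriv ℝ k (fun y => c y + ∑ lam ∈ Λ₁, a lam y) x := by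
      have eb : b0 = fun y => (1:ℝ) + (-κ⁻¹) • (c y + ∑ lam ∈ Λ₁, a lam y) := by
        funext y; simp [hb0def, smul_eq_mul]
      rw [eb]
      have EA : iteratedFDeriv ℝ k (fun y : Euc d => (1:ℝ) + (-κ⁻¹) • (c y + ∑ lam ∈ Λ₁, a lam y)) x = iteratedFDeriv ℝ k (fun _ : Euc d => (1:ℝ)) x
          + iteratedFDeriv ℝ k (fun y => (-κ⁻¹) • (c y + ∑ lam ∈ Λ₁, a lam y)) x :=
        iteratedFDeriv_add_apply' (f := fun _ : Euc d => (1:ℝ))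
          (g := fun y => (-κ⁻¹) • (c y + ∑ lam ∈ Λ₁, a lam y))
          (contDiff_const.of_le (hkm' k hk)).contDiffAt
          ((hg_cd.const_smul (-κ⁻¹)).of_le (hkm' k hk)).contDiffAt
      have EB : iteratedFDeriv ℝ k (fun y => (-κ⁻¹) • (c y + ∑ lam ∈ Λ₁, a lam y)) x
          = (-κ⁻¹) • iteratedFDeriv ℝ k (fun y => c y + ∑ lam ∈ Λ₁, a lam y) x :=
        iteratedFDeriv_const_smul_apply' (hg_cd.of_le (hkm' k hk)).contDiffAt
      rw [EA, EB]
    have hb0k : ‖iteratedFDeriv ℝ k b0 x‖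
        ≤ 1 + κ⁻¹ * ((1 + MM) + Ca * (2 * Λ₁.card + MM)) := by
      rw [eb0]
      refine (norm_add_le _ _).trans ?_
      rw [norm_smul, Real.norm_eq_abs, abs_neg, abs_of_nonneg hκinv0]
      have h7 := hg_bd k hk x
      linarith [mul_le_mul_of_nonneg_left h7 hκinv0, hconst_bd]
    have hbbk : ∑ lam ∈ Λ₁, ‖iteratedFDeriv ℝ k (bb lam) x‖
        ≤ κ⁻¹ * (Ca * (2 * Λ₁.card + MM)) := by
      have e : ∀ lam ∈ Λ₁, ‖iteratedFDeriv ℝ k (bb lam) x‖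
          = κ⁻¹ * ‖iteratedFDeriv ℝ k (a lam) x‖ := by
        intro lam hl
        have ebb : bb lam = fun y => κ⁻¹ • a lam y := by
          funext y; simp [hbbdef, smul_eq_mul]
        rw [ebb]
        have E : iteratedFDeriv ℝ k (fun y => κ⁻¹ • a lam y) x
            = κ⁻¹ • iteratedFDeriv ℝ k (a lam) x :=
          iteratedFDeriv_const_smul_apply' ((ha_cd lam hl).of_le (hkm' k hk)).contDiffAt
        rw [E, norm_smul, Real.norm_eq_abs, abs_of_nonneg hκinv0]
      rw [Finset.sum_congr rfl e, ← Finset.mul_sum]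
      exact mul_le_mul_of_nonneg_left (hsa_bd k hk x) hκinv0
    rw [hCbdef]
    linarith
  have hw0_bd : ∀ k, k ≤ m → ∀ x, ‖iteratedFDeriv ℝ k w0 x‖ ≤ κ⁻¹ * Cf := by
    intro k hk x
    have ew : w0 = fun y => κ⁻¹ • f y := by
      funext y; simp [hw0def, smul_eq_mul]
    rw [ew]
    have E : iteratedFDeriv ℝ k (fun y => κ⁻¹ • f y) x = κ⁻¹ • iteratedFDeriv ℝ k f x :=
      iteratedFDeriv_const_smul_apply' (hf_cd.of_le (hkm' k hk)).contDiffAt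
    rw [E, norm_smul, Real.norm_eq_abs, abs_of_nonneg hκinv0]
    exact mul_le_mul_of_nonneg_left (hCf x k hk) hκinv0
  obtain ⟨v, hvmem, hvfix⟩ := master_fixed_point m Λ₁ h b0 bb w0 θ Cb (κ⁻¹ * Cf) hθ1
    hb0_cd hbb_cd hb0_nonneg hbb_nonneg hsumθ hCb_bd hw0_cd hw0_bd
  have hfix : ∀ (u : Euc d → ℝ) (x : Euc d), LhE Λ₁ q p c h u x + f x
      = κ * ((b0 x * u x + ∑ lam ∈ Λ₁, bb lam x * u (x + h • lam)) + κ⁻¹ * f x - u x) := by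
    intro u x
    simp only [LhE, deltaOp, hb0def, hbbdef, hadef]
    have e1 : ∑ lam ∈ Λ₁, (h⁻¹ * q lam x + p lam x) * (h⁻¹ * (u (x + h • lam) - u x))
        = (∑ lam ∈ Λ₁, h⁻¹ * (h⁻¹ * q lam x + p lam x) * u (x + h • lam))
          - (∑ lam ∈ Λ₁, h⁻¹ * (h⁻¹ * q lam x + p lam x)) * u x := by
      rw [Finset.sum_mul, ← Finset.sum_sub_distrib]
      exact Finset.sum_congr rfl fun lam _ => by ring
    have e2 : ∑ lam ∈ Λ₁, κ⁻¹ * (h⁻¹ * (h⁻¹ * q lam x + p lam x)) * u (x + h • lam)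
        = κ⁻¹ * ∑ lam ∈ Λ₁, h⁻¹ * (h⁻¹ * q lam x + p lam x) * u (x + h • lam) := by
      rw [Finset.mul_sum]
      exact Finset.sum_congr rfl fun lam _ => by ring
    rw [e1, e2]
    field_simp
    ring
  have hveq : ∀ x, LhE Λ₁ q p c h v x + f x = 0 := by
    intro x
    rw [hfix v x]
    have h8 := hvfix x
    simp only [hw0def] at h8
    have e : (b0 x * v x + ∑ lam ∈ Λ₁, bb lam x * v (x + h • lam)) + κ⁻¹ * f x - v x = 0 := by
      linarith
    rw [e, mul_zero]
  obtain ⟨hv_cd, Cv, hCv⟩ := hvmem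
  have hvsol : IsFDSolE Λ₁ q p c f h v := by
    refine ⟨hv_cd.continuous.measurable, ⟨Cv, fun x => ?_⟩, hveq⟩
    have h9 := hCv x 0 (Nat.zero_le m)
    rwa [norm_iteratedFDeriv_zero, Real.norm_eq_abs] at h9
  have huniq : ∀ v1 v2 : Euc d → ℝ, IsFDSolE Λ₁ q p c f h v1 → IsFDSolE Λ₁ q p c f h v2 →
      ∀ x, v1 x = v2 x := by
    intro v1 v2 hv1 hv2 x
    obtain ⟨-, ⟨C1, hC1⟩, he1⟩ := hv1
    obtain ⟨-, ⟨C2, hC2⟩, he2⟩ := hv2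
    set u : Euc d → ℝ := fun y => v1 y - v2 y with hudef
    have hsolve : ∀ (vv : Euc d → ℝ), (∀ y, LhE Λ₁ q p c h vv y + f y = 0) → ∀ y,
        vv y = b0 y * vv y + (∑ lam ∈ Λ₁, bb lam y * vv (y + h • lam)) + κ⁻¹ * f y := by
      intro vv hvv y
      have h10 := hvv y
      rw [hfix vv y] at h10
      have h11 : (b0 y * vv y + ∑ lam ∈ Λ₁, bb lam y * vv (y + h • lam)) + κ⁻¹ * f y - vv y = 0 :=
        by
          rcases mul_eq_zero.1 h10 with h12 | h12
          · exact absurd h12 hκne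
          · exact h12
      linarith
    have hufix : ∀ y, u y = b0 y * u y + ∑ lam ∈ Λ₁, bb lam y * u (y + h • lam) := by
      intro y
      have g1 := hsolve v1 he1 y
      have g2 := hsolve v2 he2 y
      have esum : ∑ lam ∈ Λ₁, bb lam y * (v1 (y + h • lam) - v2 (y + h • lam))
          = (∑ lam ∈ Λ₁, bb lam y * v1 (y + h • lam))
            - ∑ lam ∈ Λ₁, bb lam y * v2 (y + h • lam) := by
        rw [← Finset.sum_sub_distrib]
        exact Finset.sum_congr rfl fun lam _ => by ring
      simp only [hudef]
      rw [esum]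
      have hexp : b0 y * (v1 y - v2 y) = b0 y * v1 y - b0 y * v2 y := by ring
      linear_combination g1 - g2 - hexp
    have hbddu : ∀ y, |u y| ≤ C1 + C2 := by
      intro y
      simp only [hudef]
      have h13 : |v1 y - v2 y| ≤ |v1 y| + |v2 y| := by
        rw [sub_eq_add_neg]
        exact (abs_add_le _ _).trans (by rw [abs_neg])
      linarith [hC1 y, hC2 y]
    set W : ℝ := ⨆ y : Euc d, |u y| with hWdef
    have hbdd : BddAbove (Set.range fun y : Euc d => |u y|) :=
      ⟨C1 + C2, by rintro r ⟨y, rfl⟩; exact hbddu y⟩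
    have hWle : ∀ y, |u y| ≤ W := fun y => le_ciSup hbdd y
    have hW0 : 0 ≤ W := le_trans (abs_nonneg _) (hWle 0)
    have hcontr : ∀ y, |u y| ≤ θ * W := by
      intro y
      rw [hufix y]
      calc |b0 y * u y + ∑ lam ∈ Λ₁, bb lam y * u (y + h • lam)|
          ≤ |b0 y * u y| + |∑ lam ∈ Λ₁, bb lam y * u (y + h • lam)| := abs_add_le _ _
        _ ≤ b0 y * W + ∑ lam ∈ Λ₁, bb lam y * W := by
            refine add_le_add ?_ ?_
            · rw [abs_mul, abs_of_nonneg (hb0_nonneg y)]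
              exact mul_le_mul_of_nonneg_left (hWle y) (hb0_nonneg y)
            · refine (Finset.abs_sum_le_sum_abs _ _).trans (Finset.sum_le_sum fun lam hl => ?_)
              rw [abs_mul, abs_of_nonneg (hbb_nonneg lam hl y)]
              exact mul_le_mul_of_nonneg_left (hWle _) (hbb_nonneg lam hl y)
        _ = (b0 y + ∑ lam ∈ Λ₁, bb lam y) * W :=
            ((add_mul (b0 y) (∑ lam ∈ Λ₁, bb lam y) W).trans
              (by rw [Finset.sum_mul])).symm
        _ ≤ θ * W := mul_le_mul_of_nonneg_right (hsumθ y) hW0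
    have hWθ : W ≤ θ * W := ciSup_le hcontr
    have hWneg : W ≤ 0 := by nlinarith
    have hux : u x = 0 := abs_eq_zero.1 (le_antisymm ((hWle x).trans hWneg) (abs_nonneg _))
    have : v1 x - v2 x = 0 := hux
    linarith
  refine ⟨⟨v, hvsol⟩, huniq, ?_⟩
  intro v1 hv1
  have hvv : v1 = v := funext fun x => huniq v1 v hv1 hvsol x
  rw [hvv]
  exact ⟨hv_cd, Cv, hCv⟩
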